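/- For integers q ≥ 2, t ≥ 1, r with 1 ≤ r < t, and β = ⌈(t+r)/2⌉, one has θ_{β-1}·(q^β + 1) ≤ θ_{t+r}, where θ_i = (q^i - 1)/(q - 1). -/

import Mathlib

/-- θ_i = (q^i - 1)/(q - 1). -/
def theta (q i : ℕ) : ℕ := (q ^ i - 1) / (q - 1)

/-! Write `S n = 1 + q + ⋯ + q^(n-1)`. Splitting `S (a + b) = S a + q^a S b` and using
`q S a ≤ S (a + 1) ≤ S b` gives `S a (q^(a+1) + 1) = S a + q^a (q S a) ≤ S (a + b)`. With
`a = β - 1` and `b = t + r - a ≥ β` this is the claimed inequality. -/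

open Finset

theorem geom_sum_le_geom_sum_of_le {R : Type*} [CommSemiring R] [PartialOrder R]
    [IsOrderedRing R] {q : R} (hq : 0 ≤ q) {m n : ℕ} (hmn : m ≤ n) :
    ∑ i ∈ range m, q ^ i ≤ ∑ i ∈ range n, q ^ i :=
  sum_le_sum_of_subset_of_nonneg (range_subset_range.mpr hmn) fun i _ _ ↦ pow_nonneg hq i

theorem geom_sum_mul_pow_succ_add_one_le {R : Type*} [CommSemiring R] [PartialOrder R]
    [IsOrderedRing R] {q : R} (hq : 0 ≤ q) {a b : ℕ} (hab : a < b) :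
    (∑ i ∈ range a, q ^ i) * (q ^ (a + 1) + 1) ≤ ∑ i ∈ range (a + b), q ^ i := by
  have hsplit : ∑ i ∈ range (a + b), q ^ i
      = ∑ i ∈ range a, q ^ i + q ^ a * ∑ i ∈ range b, q ^ i := by
    simp only [sum_range_add, pow_add, mul_sum]
  have hsucc : q * ∑ i ∈ range a, q ^ i ≤ ∑ i ∈ range b, q ^ i :=
    calc q * ∑ i ∈ range a, q ^ i
        ≤ q * ∑ i ∈ range a, q ^ i + 1 := le_add_of_nonneg_right zero_le_one
      _ = ∑ i ∈ range (a + 1), q ^ i := geom_sum_succ.symm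
      _ ≤ ∑ i ∈ range b, q ^ i := geom_sum_le_geom_sum_of_le hq hab
  calc (∑ i ∈ range a, q ^ i) * (q ^ (a + 1) + 1)
      = ∑ i ∈ range a, q ^ i + q ^ a * (q * ∑ i ∈ range a, q ^ i) := by ring
    _ ≤ ∑ i ∈ range a, q ^ i + q ^ a * ∑ i ∈ range b, q ^ i := by gcongr
    _ = ∑ i ∈ range (a + b), q ^ i := hsplit.symm

theorem theta_eq_geom_sum {q : ℕ} (hq : 2 ≤ q) (n : ℕ) : theta q n = ∑ i ∈ range n, q ^ i :=
  (Nat.geomSum_eq hq n).symm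

theorem theta_beta_ineq_general (q t r : ℕ) (hq : 2 ≤ q) :
    theta q ((t + r + 1) / 2 - 1) * (q ^ ((t + r + 1) / 2) + 1) ≤ theta q (t + r) := by
  obtain hβ | hβ := Nat.eq_zero_or_pos ((t + r + 1) / 2)
  · simp [hβ, theta]
  set a := (t + r + 1) / 2 - 1
  have hβa : (t + r + 1) / 2 = a + 1 := by omega
  have hsplit : t + r = a + (t + r - a) := by omega
  rw [hβa, theta_eq_geom_sum hq, theta_eq_geom_sum hq, hsplit]
  exact geom_sum_mul_pow_succ_add_one_le (Nat.zero_le q) (by omega)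

theorem theta_beta_ineq (q t r : ℕ) (hq : 2 ≤ q) (ht : 1 ≤ t)
    (hr1 : 1 ≤ r) (hr2 : r < t) :
    theta q ((t + r + 1) / 2 - 1) * (q ^ ((t + r + 1) / 2) + 1) ≤ theta q (t + r) :=
  theta_beta_ineq_general q t r hq
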